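/- arXiv:2605.15545 — 2 statements merged into one kernel-verified Lean document; each statement's English description precedes it below -/
import Mathlib

section
/- Let d ≥ 1 and suppose S: ℤ^d → [0,∞) satisfies Assumption Ω. Then Ω is bounded and convex, the mass satisfies m_S ∈ (0, μ₁], and the closure Ω̄ satisfies {μ ∈ ℝ^d : ‖μ‖₁ ≤ m_S} ⊆ Ω̄ ⊆ {μ ∈ ℝ^d : ‖μ‖_∞ ≤ m_S}. Moreover, every μ ∈ ∂Ω satisfies ‖μ‖_∞ ≤ m_S ≤ ‖μ‖₁ and χ^{(μ)} = ∞. -/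
open scoped BigOperators ENNReal Real Topology Pointwise
open MeasureTheory Matrix Filter

noncomputable section

namespace OZpaper

variable {d : ℕ}

/-- Dot product of a real vector with a lattice point. -/
def rdotZ (μ : Fin d → ℝ) (x : Fin d → ℤ) : ℝ := ∑ i, μ i * (x i : ℝ)

/-- Dot product of two real vectors. -/
def rdot (μ x : Fin d → ℝ) : ℝ := ∑ i, μ i * x i

/-- Euclidean norm of a lattice point. -/
def enormZ (x : Fin d → ℤ) : ℝ := Real.sqrt (∑ i, ((x i : ℝ)) ^ 2)

/-- Euclidean norm of a real vector. -/
def enormR (x : Fin d → ℝ) : ℝ := Real.sqrt (∑ i, (x i) ^ 2)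

/-- ℓ¹ norm of a real vector. -/
def l1R (x : Fin d → ℝ) : ℝ := ∑ i, |x i|

/-- ℓ∞ norm of a real vector. -/
def linftyR (x : Fin d → ℝ) : ℝ := ⨆ i, |x i|

/-- The vector `t • e₁`. -/
def e1R (d : ℕ) (t : ℝ) : Fin d → ℝ := fun i => if (i : ℕ) = 0 then t else 0

/-- The lattice point `n • e₁`. -/
def e1Z (d : ℕ) (n : ℤ) : Fin d → ℤ := fun i => if (i : ℕ) = 0 then n else 0

/-- Cast of a lattice point to a real vector. -/
def toR (x : Fin d → ℤ) : Fin d → ℝ := fun i => (x i : ℝ)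

/-- ℤ^d-symmetry: invariance under coordinate permutations and sign flips. -/
def ZdSymmetric (f : (Fin d → ℤ) → ℝ) : Prop :=
  (∀ (σ : Equiv.Perm (Fin d)) (x : Fin d → ℤ), f (fun i => x (σ i)) = f x) ∧
  (∀ (ε : Fin d → Bool) (x : Fin d → ℤ), f (fun i => if ε i then -(x i) else x i) = f x)

/-- Tilted susceptibility `χ^{(μ)}`, valued in `ℝ≥0∞`. -/
def chi (S : (Fin d → ℤ) → ℝ) (μ : Fin d → ℝ) : ℝ≥0∞ :=
  ∑' x, ENNReal.ofReal (S x * Real.exp (rdotZ μ x))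

/-- The set `Ω = {μ : χ^{(μ)} < ∞}`. -/
def Omega (S : (Fin d → ℤ) → ℝ) : Set (Fin d → ℝ) := {μ | chi S μ < ⊤}

/-- The mass `m_S`. -/
def mass (S : (Fin d → ℤ) → ℝ) : ℝ := sSup {t : ℝ | 0 ≤ t ∧ chi S (e1R d t) < ⊤}

/-- Assumption Ω. -/
structure AssumptionOmega (S : (Fin d → ℤ) → ℝ) : Prop where
  nonneg : ∀ x, 0 ≤ S x
  symm : ZdSymmetric S
  open_Omega : IsOpen (Omega S)
  zero_mem : (0 : Fin d → ℝ) ∈ Omega S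
  exists_not_mem : ∃ μ₁ : ℝ, 0 < μ₁ ∧ e1R d μ₁ ∉ Omega S

/-- Fourier transform `Q̂(k) = ∑_y Q(y) e^{-i k·y}`. -/
def fourierZ (Q : (Fin d → ℤ) → ℝ) (k : Fin d → ℝ) : ℂ :=
  ∑' y, (Q y : ℂ) * Complex.exp (-Complex.I * (rdotZ k y : ℂ))

/-- ℓ^p norm of a function on ℤ^d, valued in `ℝ≥0∞`. -/
def lpNorm (f : (Fin d → ℤ) → ℝ) (p : ℝ) : ℝ≥0∞ :=
  (∑' y, ENNReal.ofReal (|f y| ^ p)) ^ (1 / p)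

/-- The exponent `p_d`. -/
def pExp (d : ℕ) (ζ : ℝ) : ℝ := if d = 1 then 2 else (d : ℝ) / ((d : ℝ) - 2 + min ζ 2)

/-- The class 𝒬_{M,K,ζ} without the (d-1)-th moment bounds. -/
structure MemQweak (M K ζ : ℝ) (Q g : (Fin d → ℤ) → ℝ) : Prop where
  Q_l1 : lpNorm Q 1 ≤ ENNReal.ofReal M
  Q_moment : lpNorm (fun y => enormZ y ^ (2 + ζ) * Q y) 1 ≤ ENNReal.ofReal M
  infrared : ∀ k : Fin d → ℝ, (∀ i, |k i| ≤ π) →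
    K * enormR k ^ 2 ≤ (fourierZ Q 0 - fourierZ Q k).re
  g_l1 : lpNorm g 1 ≤ ENNReal.ofReal M
  g_zeta : lpNorm (fun y => enormZ y ^ ζ * g y) 1 ≤ ENNReal.ofReal M
  g_two : lpNorm (fun y => enormZ y ^ (2 : ℝ) * g y) (min (pExp d ζ) 2) ≤ ENNReal.ofReal M

/-- The class 𝒬_{M,K,ζ}. -/
structure MemQ (M K ζ : ℝ) (Q g : (Fin d → ℤ) → ℝ) : Prop where
  Q_l1 : lpNorm Q 1 ≤ ENNReal.ofReal M
  Q_moment : lpNorm (fun y => enormZ y ^ (2 + ζ) * Q y) 1 ≤ ENNReal.ofReal M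
  infrared : ∀ k : Fin d → ℝ, (∀ i, |k i| ≤ π) →
    K * enormR k ^ 2 ≤ (fourierZ Q 0 - fourierZ Q k).re
  g_l1 : lpNorm g 1 ≤ ENNReal.ofReal M
  g_zeta : lpNorm (fun y => enormZ y ^ ζ * g y) 1 ≤ ENNReal.ofReal M
  g_two : lpNorm (fun y => enormZ y ^ (2 : ℝ) * g y) (min (pExp d ζ) 2) ≤ ENNReal.ofReal M
  Q_dm1 : 4 ≤ d →
    lpNorm (fun y => enormZ y ^ ((d : ℝ) - 1) * Q y) (min ((d : ℝ) / 3) 2) ≤ ENNReal.ofReal M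
  g_dm1 : 4 ≤ d →
    lpNorm (fun y => enormZ y ^ ((d : ℝ) - 1) * g y) 2 ≤ ENNReal.ofReal M

/-- Convolution on ℤ^d. -/
def conv (f g : (Fin d → ℤ) → ℝ) (x : Fin d → ℤ) : ℝ := ∑' y, f (x - y) * g y

/-- Exponential tilt `f^{(μ)}`. -/
def tilt (f : (Fin d → ℤ) → ℝ) (μ : Fin d → ℝ) : (Fin d → ℤ) → ℝ :=
  fun x => f x * Real.exp (rdotZ μ x)

/-- `∑_y f(y) e^{μ·y}`, i.e. `f̂^{(μ)}(0)`. -/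
def tiltSum (f : (Fin d → ℤ) → ℝ) (μ : Fin d → ℝ) : ℝ := ∑' y, f y * Real.exp (rdotZ μ y)

/-- Assumption J. -/
structure AssumptionJ (S J h : (Fin d → ℤ) → ℝ) (M K ζ : ℝ) : Prop where
  M_pos : 0 < M
  K_pos : 0 < K
  zeta_pos : 0 < ζ
  J_symm : ZdSymmetric J
  h_symm : ZdSymmetric h
  J_summable : Summable fun x => |J x|
  h_summable : Summable fun x => |h x|
  OZ_eq : ∀ x, S x = h x + conv J S x
  memQ : ∀ μ ∈ closure (Omega S), MemQ M K ζ (tilt J μ) (tilt h μ)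
  hhat_pos : ∀ μ ∈ closure (Omega S), 0 < tiltSum h μ

/-- Assumption J, without the (d-1)-th moment bounds of the class 𝒬. -/
structure AssumptionJweak (S J h : (Fin d → ℤ) → ℝ) (M K ζ : ℝ) : Prop where
  M_pos : 0 < M
  K_pos : 0 < K
  zeta_pos : 0 < ζ
  J_symm : ZdSymmetric J
  h_symm : ZdSymmetric h
  J_summable : Summable fun x => |J x|
  h_summable : Summable fun x => |h x|
  OZ_eq : ∀ x, S x = h x + conv J S x
  memQ : ∀ μ ∈ closure (Omega S), MemQweak M K ζ (tilt J μ) (tilt h μ)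
  hhat_pos : ∀ μ ∈ closure (Omega S), 0 < tiltSum h μ

/-- `μ` is the optimal tilt `μ_x̂` for direction `x`. -/
def IsOptTilt (S : (Fin d → ℤ) → ℝ) (x μ : Fin d → ℝ) : Prop :=
  μ ∈ frontier (Omega S) ∧ ∀ ν ∈ closure (Omega S), rdot ν x ≤ rdot μ x

/-- The norm `|x|_S = (max_{μ ∈ Ω̄} μ·x)/m_S`. -/
def normS (S : (Fin d → ℤ) → ℝ) (x : Fin d → ℝ) : ℝ :=
  sSup ((fun μ => rdot μ x) '' closure (Omega S)) / mass S

/-- The drift vector `η` of the tilted kernel. -/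
def etaOf (J : (Fin d → ℤ) → ℝ) (μ : Fin d → ℝ) : Fin d → ℝ :=
  fun j => ∑' y, (y j : ℝ) * J y * Real.exp (rdotZ μ y)

/-- The covariance matrix `Λ` of the tilted kernel. -/
def LambdaOf (J : (Fin d → ℤ) → ℝ) (μ : Fin d → ℝ) : Matrix (Fin d) (Fin d) ℝ :=
  Matrix.of fun j l => ∑' y, (y j : ℝ) * (y l : ℝ) * J y * Real.exp (rdotZ μ y)

/-- The Brownian heat kernel `ρ_t(x; η, Λ)`. -/
def heatKer (d : ℕ) (t : ℝ) (x η : Fin d → ℝ) (Λ : Matrix (Fin d) (Fin d) ℝ) : ℝ :=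
  (1 / Real.sqrt Λ.det) * (1 / (2 * π * t) ^ ((d : ℝ) / 2)) *
    Real.exp (-(1 / (2 * t)) * rdot (x - t • η) (Λ⁻¹ *ᵥ (x - t • η)))

/-- The Brownian Green function `𝒞(x; η, Λ)`. -/
def greenC (d : ℕ) (x η : Fin d → ℝ) (Λ : Matrix (Fin d) (Fin d) ℝ) : ℝ :=
  ∫ t in Set.Ioi (0 : ℝ), heatKer d t x η Λ

/-- The massive continuum Green function `𝔾_a(x)`. -/
def massiveG (d : ℕ) (a : ℝ) (x : Fin d → ℝ) : ℝ :=
  ∫ t in Set.Ioi (0 : ℝ),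
    (1 / (2 * π * t) ^ ((d : ℝ) / 2)) * Real.exp (-enormR x ^ 2 / (2 * t)) *
      Real.exp (-(t * a ^ 2) / 2)

/-- The constant `A_φ = ∫_{ℝ^d} ‖y‖₂^φ 𝔾₁(y) dy`. -/
def Aconst (d : ℕ) (φ : ℝ) : ℝ := ∫ y : Fin d → ℝ, enormR y ^ φ * massiveG d 1 y

/-- The torus `[-π, π]^d`. -/
def torus (d : ℕ) : Set (Fin d → ℝ) := Set.univ.pi fun _ => Set.Icc (-π) π

/-- The Fourier integral `I_t(x)`. -/
def It (Q g : (Fin d → ℤ) → ℝ) (t : ℝ) (x : Fin d → ℤ) : ℂ :=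
  (((2 * π) ^ d : ℝ) : ℂ)⁻¹ *
    ∫ k in torus d, Complex.exp (Complex.I * (rdotZ k x : ℂ)) * fourierZ g k *
      Complex.exp (-(t : ℂ) * (fourierZ Q 0 - fourierZ Q k))

/-- The quantity `G_Q(x)`. -/
def GQ (Q g : (Fin d → ℤ) → ℝ) (x : Fin d → ℤ) : ℂ :=
  ∫ t in Set.Ioi (0 : ℝ), It Q g t x

/-- The Kronecker delta at the origin. -/
def deltaZ (d : ℕ) : (Fin d → ℤ) → ℝ := fun x => if x = 0 then 1 else 0

/-- n-fold convolution power. -/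
def convPow (D : (Fin d → ℤ) → ℝ) : ℕ → (Fin d → ℤ) → ℝ
  | 0 => deltaZ d
  | n + 1 => conv D (convPow D n)

/-- Random-walk Green function `S_z(x) = ∑_n z^n D^{*n}(x)`. -/
def rwG (D : (Fin d → ℤ) → ℝ) (z : ℝ) (x : Fin d → ℤ) : ℝ :=
  ∑' n : ℕ, z ^ n * convPow D n x

/-- `σ² = ∑_x ‖x‖₂² J(x)`. -/
def sigmaSq (J : (Fin d → ℤ) → ℝ) : ℝ := ∑' x, enormZ x ^ 2 * J x

/-- Susceptibility `χ = ∑_x S(x)`. -/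
def suscept (S : (Fin d → ℤ) → ℝ) : ℝ := ∑' x, S x

/-- `ĥ(0) = ∑_x h(x)`. -/
def h0 (h : (Fin d → ℤ) → ℝ) : ℝ := ∑' x, h x

/-- Correlation length of order φ. -/
def xiPhi (S : (Fin d → ℤ) → ℝ) (φ : ℝ) : ℝ :=
  ((∑' x, enormZ x ^ φ * S x) / suscept S) ^ (1 / φ)

/-- A critical family of OZ systems. -/
structure CriticalFamily (d : ℕ) (δ zc M K ζ : ℝ) (S J h : ℝ → (Fin d → ℤ) → ℝ) : Prop where
  δ_pos : 0 < δ
  assumOmega : ∀ z ∈ Set.Ico (zc - δ) zc, AssumptionOmega (S z)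
  assumJ : ∀ z ∈ Set.Ico (zc - δ) zc, AssumptionJ (S z) (J z) (h z) M K ζ
  mass_tendsto : Tendsto (fun z => mass (S z)) (𝓝[<] zc) (𝓝 0)

/-- Convolution on ℤ. -/
def convZ (f g : ℤ → ℝ) (x : ℤ) : ℝ := ∑' y, f (x - y) * g y

/-- n-fold convolution power on ℤ. -/
def convZPow (f : ℤ → ℝ) : ℕ → ℤ → ℝ
  | 0 => fun x => if x = 0 then 1 else 0
  | n + 1 => convZ f (convZPow f n)

section Aux

lemma mem_Omega_iff {S : (Fin d → ℤ) → ℝ} {μ : Fin d → ℝ} :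
    μ ∈ Omega S ↔ chi S μ < ⊤ := Iff.rfl

/-- Sign-flip / permutation equivalence on the lattice. -/
def latEquiv (σ : Equiv.Perm (Fin d)) (ε : Fin d → Bool) : (Fin d → ℤ) ≃ (Fin d → ℤ) where
  toFun x := fun i => if ε (σ.symm i) then -(x (σ.symm i)) else x (σ.symm i)
  invFun y := fun j => if ε j then -(y (σ j)) else y (σ j)
  left_inv x := by
    funext j
    simp only [Equiv.symm_apply_apply]
    cases h : ε j <;> simp [h]
  right_inv y := by
    funext i
    cases h : ε (σ.symm i) <;> simp [h, Equiv.apply_symm_apply]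

lemma chi_transform (S : (Fin d → ℤ) → ℝ) (hsym : ZdSymmetric S)
    (σ : Equiv.Perm (Fin d)) (ε : Fin d → Bool) (μ : Fin d → ℝ) :
    chi S (fun j => if ε j then -(μ (σ j)) else μ (σ j)) = chi S μ := by
  unfold chi
  rw [← Equiv.tsum_eq (latEquiv σ ε) (fun x => ENNReal.ofReal (S x * Real.exp (rdotZ μ x)))]
  apply tsum_congr
  intro x
  have hs : S (latEquiv σ ε x) = S x := by
    have h1 := hsym.2 (fun i => ε (σ.symm i)) (fun i => x (σ.symm i))
    have h2 := hsym.1 σ.symm x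
    simpa [latEquiv] using h1.trans h2
  have hdot : rdotZ μ (latEquiv σ ε x)
      = rdotZ (fun j => if ε j then -(μ (σ j)) else μ (σ j)) x := by
    unfold rdotZ
    rw [← Equiv.sum_comp σ (fun i => μ i * (((latEquiv σ ε x) i : ℤ) : ℝ))]
    refine Finset.sum_congr rfl fun j _ => ?_
    simp only [latEquiv, Equiv.coe_fn_mk, Equiv.symm_apply_apply]
    cases h : ε j <;> simp [h]
  rw [hs, hdot]

lemma chi_perm (S : (Fin d → ℤ) → ℝ) (hsym : ZdSymmetric S)
    (σ : Equiv.Perm (Fin d)) (μ : Fin d → ℝ) :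
    chi S (fun j => μ (σ j)) = chi S μ := by
  simpa using chi_transform S hsym σ (fun _ => false) μ

lemma chi_flip (S : (Fin d → ℤ) → ℝ) (hsym : ZdSymmetric S)
    (ε : Fin d → Bool) (μ : Fin d → ℝ) :
    chi S (fun j => if ε j then -(μ j) else μ j) = chi S μ := by
  simpa using chi_transform S hsym (Equiv.refl _) ε μ

lemma chi_neg (S : (Fin d → ℤ) → ℝ) (hsym : ZdSymmetric S) (μ : Fin d → ℝ) :
    chi S (-μ) = chi S μ := by
  have := chi_flip S hsym (fun _ => true) μ
  show chi S (fun j => -μ j) = chi S μ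
  simpa using this

lemma e1R_zero : e1R d 0 = 0 := by
  funext i; simp [e1R]

lemma e1R_neg (t : ℝ) : e1R d (-t) = -(e1R d t) := by
  funext i; simp only [e1R, Pi.neg_apply]; split <;> simp

lemma chi_convex_le (S : (Fin d → ℤ) → ℝ) (hS0 : ∀ x, 0 ≤ S x) (μ ν : Fin d → ℝ)
    {a b : ℝ} (ha : 0 ≤ a) (hb : 0 ≤ b) (hab : a + b = 1) :
    chi S (a • μ + b • ν) ≤ ENNReal.ofReal a * chi S μ + ENNReal.ofReal b * chi S ν := by
  unfold chi
  rw [← ENNReal.tsum_mul_left, ← ENNReal.tsum_mul_left, ← ENNReal.tsum_add]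
  apply ENNReal.tsum_le_tsum
  intro x
  have hdot : rdotZ (a • μ + b • ν) x = a * rdotZ μ x + b * rdotZ ν x := by
    simp [rdotZ, add_mul, mul_assoc, Finset.sum_add_distrib, Finset.mul_sum]
  rw [hdot]
  have hexp := convexOn_exp.2 (Set.mem_univ (rdotZ μ x)) (Set.mem_univ (rdotZ ν x)) ha hb hab
  simp only [smul_eq_mul] at hexp
  calc ENNReal.ofReal (S x * Real.exp (a * rdotZ μ x + b * rdotZ ν x))
      ≤ ENNReal.ofReal (a * (S x * Real.exp (rdotZ μ x)) + b * (S x * Real.exp (rdotZ ν x))) := by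
        apply ENNReal.ofReal_le_ofReal
        nlinarith [mul_le_mul_of_nonneg_left hexp (hS0 x)]
    _ ≤ _ := by
        rw [ENNReal.ofReal_add (mul_nonneg ha (mul_nonneg (hS0 x) (Real.exp_pos _).le))
          (mul_nonneg hb (mul_nonneg (hS0 x) (Real.exp_pos _).le)),
          ENNReal.ofReal_mul ha, ENNReal.ofReal_mul hb]

lemma omega_convex (S : (Fin d → ℤ) → ℝ) (hS0 : ∀ x, 0 ≤ S x) : Convex ℝ (Omega S) := by
  intro μ hμ ν hν a b ha hb hab
  have h := chi_convex_le S hS0 μ ν ha hb hab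
  refine lt_of_le_of_lt h (ENNReal.add_lt_top.mpr ⟨?_, ?_⟩)
  · exact ENNReal.mul_lt_top ENNReal.ofReal_lt_top hμ
  · exact ENNReal.mul_lt_top ENNReal.ofReal_lt_top hν

lemma rdotZ_e1R (hd : 1 ≤ d) (c : ℝ) (x : Fin d → ℤ) :
    rdotZ (e1R d c) x = c * ((x ⟨0, hd⟩ : ℤ) : ℝ) := by
  unfold rdotZ e1R
  rw [Finset.sum_eq_single (⟨0, hd⟩ : Fin d)]
  · simp
  · intro i _ hi
    have : (i : ℕ) ≠ 0 := fun h => hi (Fin.ext h)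
    simp [this]
  · intro h; exact absurd (Finset.mem_univ _) h

lemma chi_e1_mono (hd : 1 ≤ d) (S : (Fin d → ℤ) → ℝ) (hS0 : ∀ x, 0 ≤ S x)
    {s t : ℝ} (hst : |s| ≤ t) :
    chi S (e1R d s) ≤ chi S (e1R d t) + chi S (e1R d (-t)) := by
  unfold chi
  rw [← ENNReal.tsum_add]
  apply ENNReal.tsum_le_tsum
  intro x
  rw [rdotZ_e1R hd, rdotZ_e1R hd, rdotZ_e1R hd]
  set c : ℝ := ((x ⟨0, hd⟩ : ℤ) : ℝ) with hc
  obtain ⟨h1, h2⟩ := abs_le.mp hst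
  have key : Real.exp (s * c) ≤ Real.exp (t * c) + Real.exp (-t * c) := by
    rcases le_total 0 c with hcpos | hcneg
    · have : s * c ≤ t * c := mul_le_mul_of_nonneg_right h2 hcpos
      calc Real.exp (s * c) ≤ Real.exp (t * c) := Real.exp_le_exp.mpr this
        _ ≤ _ := le_add_of_nonneg_right (Real.exp_pos _).le
    · have : s * c ≤ -t * c := by nlinarith
      calc Real.exp (s * c) ≤ Real.exp (-t * c) := Real.exp_le_exp.mpr this
        _ ≤ _ := le_add_of_nonneg_left (Real.exp_pos _).le
  calc ENNReal.ofReal (S x * Real.exp (s * c))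
      ≤ ENNReal.ofReal (S x * Real.exp (t * c) + S x * Real.exp (-t * c)) := by
        apply ENNReal.ofReal_le_ofReal
        nlinarith [mul_le_mul_of_nonneg_left key (hS0 x)]
    _ ≤ _ := ENNReal.ofReal_add_le

lemma chi_basis (hd : 1 ≤ d) (S : (Fin d → ℤ) → ℝ) (hsym : ZdSymmetric S)
    (c : ℝ) (i : Fin d) :
    chi S (fun j => if j = i then c else 0) = chi S (e1R d c) := by
  have h := chi_perm S hsym (Equiv.swap ⟨0, hd⟩ i) (e1R d c)
  rw [← h]
  congr 1
  funext j
  simp only [e1R]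
  by_cases hj : j = i
  · subst hj; simp [Equiv.swap_apply_right]
  · rw [if_neg hj, if_neg]
    intro h0
    have h0' : Equiv.swap (⟨0, hd⟩ : Fin d) i j = ⟨0, hd⟩ := Fin.ext h0
    have := congrArg (Equiv.swap (⟨0, hd⟩ : Fin d) i) h0'
    rw [Equiv.swap_apply_self, Equiv.swap_apply_left] at this
    exact hj this

set_option maxHeartbeats 1000000 in
lemma chi_e1_abs_lt_top (hd : 1 ≤ d) (S : (Fin d → ℤ) → ℝ) (hS0 : ∀ x, 0 ≤ S x)
    (hsym : ZdSymmetric S) {μ : Fin d → ℝ} (hμ : chi S μ < ⊤) (i : Fin d) :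
    chi S (e1R d |μ i|) < ⊤ := by
  rw [← chi_basis hd S hsym |μ i| i]
  have key : ∀ x : Fin d → ℤ,
      ENNReal.ofReal (S x * Real.exp (rdotZ (fun j => if j = i then |μ i| else 0) x))
      ≤ ∑ ε : Fin d → Bool, ENNReal.ofReal
          (S x * Real.exp (rdotZ (fun j => if ε j then -(μ j) else μ j) x)) := by
    intro x
    obtain ⟨ε0, hε0⟩ : ∃ ε0 : Fin d → Bool, ∀ j,
        (ε0 j = true ↔ μ j * ((x j : ℤ) : ℝ) < 0) :=
      ⟨fun j => decide _, fun j => by exact decide_eq_true_iff⟩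
    have hb : ENNReal.ofReal
        (S x * Real.exp (rdotZ (fun j => if j = i then |μ i| else 0) x))
        ≤ ENNReal.ofReal
        (S x * Real.exp (rdotZ (fun j => if ε0 j then -(μ j) else μ j) x)) := by
      apply ENNReal.ofReal_le_ofReal
      refine mul_le_mul_of_nonneg_left (Real.exp_le_exp.mpr ?_) (hS0 x)
      have h1 : rdotZ (fun j => if j = i then |μ i| else 0) x
          = |μ i| * ((x i : ℤ) : ℝ) := by
        unfold rdotZ
        rw [Finset.sum_eq_single i]
        · simp
        · intro j _ hj; simp [hj]
        · intro h; exact absurd (Finset.mem_univ _) h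
      have h2 : rdotZ (fun j => if ε0 j then -(μ j) else μ j) x
          = ∑ j, |μ j * ((x j : ℤ) : ℝ)| := by
        unfold rdotZ
        refine Finset.sum_congr rfl fun j _ => ?_
        by_cases h : μ j * ((x j : ℤ) : ℝ) < 0
        · simp only [(hε0 j).mpr h, if_true]
          rw [abs_of_neg h]; ring
        · have hc : ε0 j = false := Bool.eq_false_iff.mpr (fun hc => h ((hε0 j).mp hc))
          simp only [hc, Bool.false_eq_true, if_false]
          rw [abs_of_nonneg (not_lt.mp h)]
      rw [h1, h2]
      calc |μ i| * ((x i : ℤ) : ℝ) ≤ |μ i * ((x i : ℤ) : ℝ)| := by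
            rw [abs_mul]
            exact mul_le_mul_of_nonneg_left (le_abs_self _) (abs_nonneg _)
        _ ≤ _ := Finset.single_le_sum (f := fun j => |μ j * ((x j : ℤ) : ℝ)|)
            (fun j _ => abs_nonneg _) (Finset.mem_univ i)
    refine hb.trans ?_
    exact Finset.single_le_sum (N := ℝ≥0∞) (fun ε _ => zero_le) (Finset.mem_univ ε0)
  have hle : chi S (fun j => if j = i then |μ i| else 0)
      ≤ ∑ _ε : Fin d → Bool, chi S μ := by
    calc chi S (fun j => if j = i then |μ i| else 0)
        ≤ ∑' x, ∑ ε : Fin d → Bool, ENNReal.ofReal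
            (S x * Real.exp (rdotZ (fun j => if ε j then -(μ j) else μ j) x)) :=
          ENNReal.tsum_le_tsum key
      _ = ∑ ε : Fin d → Bool, ∑' x, ENNReal.ofReal
            (S x * Real.exp (rdotZ (fun j => if ε j then -(μ j) else μ j) x)) :=
          Summable.tsum_finsetSum (fun _ _ => ENNReal.summable)
      _ = ∑ _ε : Fin d → Bool, chi S μ :=
          Finset.sum_congr rfl (fun ε _ => chi_flip S hsym ε μ)
  refine lt_of_le_of_lt hle ?_
  exact ENNReal.sum_lt_top.mpr (fun _ _ => hμ)

end Aux

theorem statement0 (d : ℕ) (hd : 1 ≤ d) (S : (Fin d → ℤ) → ℝ)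
    (hS : AssumptionOmega S) (μ₁ : ℝ) (hμ₁ : 0 < μ₁) (hμ₁' : e1R d μ₁ ∉ Omega S) :
    Bornology.IsBounded (Omega S) ∧ Convex ℝ (Omega S) ∧
    0 < mass S ∧ mass S ≤ μ₁ ∧
    {μ : Fin d → ℝ | l1R μ ≤ mass S} ⊆ closure (Omega S) ∧
    closure (Omega S) ⊆ {μ : Fin d → ℝ | linftyR μ ≤ mass S} ∧
    ∀ μ ∈ frontier (Omega S), linftyR μ ≤ mass S ∧ mass S ≤ l1R μ ∧ chi S μ = ⊤ := by
  haveI : Nonempty (Fin d) := ⟨⟨0, hd⟩⟩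
  have hS0 := hS.nonneg
  have hsym := hS.symm
  set T : Set ℝ := {t : ℝ | 0 ≤ t ∧ chi S (e1R d t) < ⊤} with hTdef
  have hmass : mass S = sSup T := rfl
  have hzeroT : (0 : ℝ) ∈ T := by
    refine ⟨le_refl 0, ?_⟩
    rw [e1R_zero]
    exact hS.zero_mem
  have hcomp : ∀ s t : ℝ, |s| ≤ t → chi S (e1R d t) < ⊤ → chi S (e1R d s) < ⊤ := by
    intro s t hst ht
    refine lt_of_le_of_lt (chi_e1_mono hd S hS0 hst) ?_
    rw [e1R_neg, chi_neg S hsym]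
    exact ENNReal.add_lt_top.mpr ⟨ht, ht⟩
  have htle : ∀ t ∈ T, t ≤ μ₁ := by
    intro t ht
    by_contra hlt
    push_neg at hlt
    exact hμ₁' (hcomp μ₁ t (by rw [abs_of_pos hμ₁]; exact hlt.le) ht.2)
  have hTne : T.Nonempty := ⟨0, hzeroT⟩
  have hTbdd : BddAbove T := ⟨μ₁, fun t ht => htle t ht⟩
  have hmle : mass S ≤ μ₁ := by rw [hmass]; exact csSup_le hTne htle
  have hmem_le : ∀ t ∈ T, t ≤ mass S := by
    intro t ht; rw [hmass]; exact le_csSup hTbdd ht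
  have hmpos : 0 < mass S := by
    obtain ⟨ε, hε, hball⟩ := Metric.isOpen_iff.mp hS.open_Omega 0 hS.zero_mem
    have hmem : e1R d (ε / 2) ∈ Metric.ball (0 : Fin d → ℝ) ε := by
      rw [Metric.mem_ball, dist_zero_right]
      have hnorm : ‖e1R d (ε / 2)‖ ≤ ε / 2 := by
        refine (pi_norm_le_iff_of_nonneg (by linarith)).mpr fun i => ?_
        simp only [e1R, Real.norm_eq_abs]
        split
        · rw [abs_of_nonneg (by linarith)]
        · simp [abs_nonneg]; linarith
      linarith
    have hT2 : ε / 2 ∈ T := ⟨by linarith, hball hmem⟩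
    calc (0 : ℝ) < ε / 2 := by linarith
      _ ≤ mass S := hmem_le _ hT2
  have hdown : ∀ t : ℝ, 0 ≤ t → t < mass S → chi S (e1R d t) < ⊤ := by
    intro t ht0 htm
    rw [hmass] at htm
    obtain ⟨t', ht'T, htt'⟩ := exists_lt_of_lt_csSup hTne htm
    exact hcomp t t' (by rw [abs_of_nonneg ht0]; exact htt'.le) ht'T.2
  have hcoord : ∀ μ ∈ Omega S, ∀ i, |μ i| ≤ mass S := by
    intro μ hμ i
    exact hmem_le _ ⟨abs_nonneg _, chi_e1_abs_lt_top hd S hS0 hsym hμ i⟩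
  have hlinfty : ∀ μ ∈ Omega S, linftyR μ ≤ mass S := by
    intro μ hμ
    exact ciSup_le fun i => hcoord μ hμ i
  have hconv : Convex ℝ (Omega S) := omega_convex S hS0
  -- the open ℓ¹ ball is inside Ω
  have hl1open : ∀ μ : Fin d → ℝ, l1R μ < mass S → μ ∈ Omega S := by
    intro μ hμ
    have hs0 : 0 ≤ l1R μ := Finset.sum_nonneg fun i _ => abs_nonneg _
    rcases eq_or_lt_of_le hs0 with hseq | hspos
    · have hμ0 : μ = 0 := by
        funext i
        have hall := (Finset.sum_eq_zero_iff_of_nonneg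
          (fun j (_ : j ∈ Finset.univ) => abs_nonneg (μ j))).mp hseq.symm
        exact abs_eq_zero.mp (hall i (Finset.mem_univ i))
      rw [hμ0]; exact hS.zero_mem
    · set s := l1R μ with hsdef
      have hsT : chi S (e1R d s) < ⊤ := hdown s hs0 hμ
      set z : Fin d → (Fin d → ℝ) :=
        fun i => fun j => if j = i then (if 0 ≤ μ i then s else -s) else 0 with hzdef
      have hzΩ : ∀ i, z i ∈ Omega S := by
        intro i
        show chi S (z i) < ⊤
        by_cases hsign : 0 ≤ μ i
        · have : z i = fun j => if j = i then s else 0 := by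
            funext j; simp [hzdef, hsign]
          rw [this, chi_basis hd S hsym s i]
          exact hsT
        · have : z i = fun j => if j = i then -s else 0 := by
            funext j; simp [hzdef, hsign]
          rw [this, chi_basis hd S hsym (-s) i, e1R_neg, chi_neg S hsym]
          exact hsT
      set w : Fin d → ℝ := fun i => |μ i| / s with hwdef
      have hw0 : ∀ i ∈ Finset.univ, (0 : ℝ) ≤ w i :=
        fun i _ => div_nonneg (abs_nonneg _) hs0
      have hw1 : ∑ i, w i = 1 := by
        rw [hwdef]
        simp only
        rw [← Finset.sum_div]
        exact div_self (ne_of_gt hspos)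
      have hsum : ∑ i, w i • z i = μ := by
        funext j
        rw [Finset.sum_apply]
        have : ∀ i, (w i • z i) j = if j = i then w i * (if 0 ≤ μ i then s else -s) else 0 := by
          intro i
          simp only [Pi.smul_apply, hzdef, smul_eq_mul, mul_ite, mul_zero]
        rw [Finset.sum_congr rfl fun i _ => this i, Finset.sum_ite_eq]
        simp only [Finset.mem_univ, if_true, hwdef]
        by_cases hsign : 0 ≤ μ j
        · rw [if_pos hsign, div_mul_cancel₀ _ (ne_of_gt hspos), abs_of_nonneg hsign]
        · rw [if_neg hsign]
          push_neg at hsign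
          rw [abs_of_neg hsign]
          field_simp
      rw [← hsum]
      exact hconv.sum_mem hw0 hw1 fun i _ => hzΩ i
  -- closure inclusion for the ℓ¹ ball
  have hl1cl : {μ : Fin d → ℝ | l1R μ ≤ mass S} ⊆ closure (Omega S) := by
    intro μ hμ
    have htend : Tendsto (fun n : ℕ => (1 - 1 / (n + 1) : ℝ) • μ) atTop (𝓝 μ) := by
      have h1 : Tendsto (fun n : ℕ => (1 - 1 / (n + 1) : ℝ)) atTop (𝓝 1) := by
        have h2 := tendsto_one_div_add_atTop_nhds_zero_nat.const_sub (1 : ℝ)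
        simpa using h2
      have := h1.smul_const μ
      simpa using this
    apply mem_closure_of_tendsto htend
    filter_upwards with n
    apply hl1open
    have hn : (0 : ℝ) < n + 1 := by positivity
    have hfrac0 : (0 : ℝ) < 1 / (n + 1) := by positivity
    have hfrac1 : (1 : ℝ) / (n + 1) ≤ 1 := by
      rw [div_le_one hn]; linarith [Nat.cast_nonneg (α := ℝ) n]
    have hc0 : (0 : ℝ) ≤ 1 - 1 / (n + 1) := by linarith
    have hc1 : (1 - 1 / (n + 1) : ℝ) < 1 := by linarith
    have hscale : l1R ((1 - 1 / (n + 1) : ℝ) • μ) = (1 - 1 / (n + 1) : ℝ) * l1R μ := by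
      unfold l1R
      rw [Finset.mul_sum]
      refine Finset.sum_congr rfl fun i _ => ?_
      rw [Pi.smul_apply, smul_eq_mul, abs_mul, abs_of_nonneg hc0]
    rw [hscale]
    calc (1 - 1 / (n + 1) : ℝ) * l1R μ ≤ (1 - 1 / (n + 1) : ℝ) * mass S :=
          mul_le_mul_of_nonneg_left hμ hc0
      _ < mass S := mul_lt_of_lt_one_left hmpos hc1
  -- closure is inside the ℓ∞ ball
  have hinfset : {μ : Fin d → ℝ | linftyR μ ≤ mass S}
      = ⋂ i, {μ : Fin d → ℝ | |μ i| ≤ mass S} := by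
    ext μ
    simp only [Set.mem_setOf_eq, Set.mem_iInter]
    constructor
    · intro h i
      refine le_trans ?_ h
      exact le_ciSup (f := fun i => |μ i|) (Set.Finite.bddAbove (Set.finite_range _)) i
    · intro h
      exact ciSup_le h
  have hclosed : IsClosed {μ : Fin d → ℝ | linftyR μ ≤ mass S} := by
    rw [hinfset]
    exact isClosed_iInter fun i =>
      isClosed_le ((continuous_apply i).abs) continuous_const
  have hclsub : closure (Omega S) ⊆ {μ : Fin d → ℝ | linftyR μ ≤ mass S} :=
    closure_minimal (fun μ hμ => hlinfty μ hμ) hclosed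
  have hbounded : Bornology.IsBounded (Omega S) := by
    rw [isBounded_iff_forall_norm_le]
    exact ⟨mass S, fun μ hμ =>
      (pi_norm_le_iff_of_nonneg hmpos.le).mpr fun i => hcoord μ hμ i⟩
  refine ⟨hbounded, hconv, hmpos, hmle, hl1cl, hclsub, ?_⟩
  intro μ hμ
  have hcl : μ ∈ closure (Omega S) := frontier_subset_closure hμ
  have hnot : μ ∉ Omega S := by
    rw [hS.open_Omega.frontier_eq] at hμ
    exact hμ.2
  refine ⟨hclsub hcl, ?_, ?_⟩
  · by_contra hlt
    push_neg at hlt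
    exact hnot (hl1open μ hlt)
  · by_contra hne
    exact hnot (lt_of_le_of_ne le_top hne)

end OZpaper
end
end

section
/- Let d ≥ 1 and suppose S satisfies Assumptions Ω and J (the (d−1)-th moment bounds required of the class 𝒬 when d ≥ 4 are not needed for this result). Then Ω ⊆ {μ ∈ ℝ^d : ∑_y |J(y)|e^{μ·y} < ∞ and ∑_y J(y)e^{μ·y} < 1}, ∂Ω ⊆ {μ ∈ ℝ^d : ∑_y |J(y)|e^{μ·y} < ∞ and ∑_y J(y)e^{μ·y} = 1}, and Ω̄ is strictly convex: for all distinct μ, ν ∈ Ω̄, the midpoint (μ+ν)/2 lies in the interior of Ω̄. -/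
open scoped BigOperators ENNReal Real Topology Pointwise
open MeasureTheory Matrix Filter

noncomputable section

namespace OZpaper

variable {d : ℕ}

/-! ### Auxiliary lemmas -/

lemma rdotZ_sub (μ : Fin d → ℝ) (x y : Fin d → ℤ) :
    rdotZ μ (x - y) = rdotZ μ x - rdotZ μ y := by
  simp only [rdotZ, Pi.sub_apply, Int.cast_sub, mul_sub, Finset.sum_sub_distrib]

lemma rdotZ_zero_left (x : Fin d → ℤ) : rdotZ (0 : Fin d → ℝ) x = 0 := by
  simp [rdotZ]

lemma rdotZ_add_left (μ ν : Fin d → ℝ) (x : Fin d → ℤ) :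
    rdotZ (μ + ν) x = rdotZ μ x + rdotZ ν x := by
  simp only [rdotZ, Pi.add_apply, add_mul, Finset.sum_add_distrib]

lemma rdotZ_smul_left (t : ℝ) (μ : Fin d → ℝ) (x : Fin d → ℤ) :
    rdotZ (t • μ) x = t * rdotZ μ x := by
  simp only [rdotZ, Pi.smul_apply, smul_eq_mul, Finset.mul_sum, mul_assoc]

lemma abs_tilt (f : (Fin d → ℤ) → ℝ) (μ : Fin d → ℝ) (y : Fin d → ℤ) :
    |tilt f μ y| = |f y| * Real.exp (rdotZ μ y) := by
  rw [tilt, abs_mul, abs_of_pos (Real.exp_pos _)]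

lemma summable_abs_of_lpNorm_one {f : (Fin d → ℤ) → ℝ} {M : ℝ}
    (h : lpNorm f 1 ≤ ENNReal.ofReal M) : Summable fun y => |f y| := by
  have h1 : lpNorm f 1 = ∑' y, ENNReal.ofReal |f y| := by
    simp [lpNorm]
  rw [h1] at h
  have hne : (∑' y, ENNReal.ofReal |f y|) ≠ ⊤ :=
    ne_top_of_le_ne_top ENNReal.ofReal_ne_top h
  have := ENNReal.summable_toReal hne
  refine this.congr fun y => ?_
  rw [ENNReal.toReal_ofReal (abs_nonneg _)]

lemma enormZ_nonneg (y : Fin d → ℤ) : 0 ≤ enormZ y := Real.sqrt_nonneg _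

lemma abs_coord_le_enormZ (y : Fin d → ℤ) (i : Fin d) : |(y i : ℝ)| ≤ enormZ y := by
  rw [enormZ, ← Real.sqrt_sq_eq_abs]
  exact Real.sqrt_le_sqrt (Finset.single_le_sum (f := fun j => ((y j : ℝ))^2)
    (fun j _ => sq_nonneg _) (Finset.mem_univ i))

lemma abs_rdotZ_le (u : Fin d → ℝ) (y : Fin d → ℤ) :
    |rdotZ u y| ≤ (∑ i, |u i|) * enormZ y := by
  calc |rdotZ u y| ≤ ∑ i, |u i * (y i : ℝ)| := Finset.abs_sum_le_sum_abs _ _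
    _ ≤ ∑ i, |u i| * enormZ y := by
        refine Finset.sum_le_sum fun i _ => ?_
        rw [abs_mul]
        exact mul_le_mul_of_nonneg_left (abs_coord_le_enormZ y i) (abs_nonneg _)
    _ = (∑ i, |u i|) * enormZ y := by rw [Finset.sum_mul]

/-- `x² ≤ 1 + x^(2+ζ)` for `x ≥ 0`, `ζ ≥ 0`, with rpow. -/
lemma sq_le_one_add_rpow {x ζ : ℝ} (hx : 0 ≤ x) (hζ : 0 ≤ ζ) :
    x ^ 2 ≤ 1 + x ^ (2 + ζ) := by
  rcases le_total x 1 with hx1 | hx1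
  · have : x ^ 2 ≤ 1 := by nlinarith
    have h2 : 0 ≤ x ^ (2 + ζ) := Real.rpow_nonneg hx _
    linarith
  · have : x ^ (2:ℝ) ≤ x ^ (2 + ζ) := Real.rpow_le_rpow_of_exponent_le hx1 (by linarith)
    rw [Real.rpow_two] at this
    have h1 : (0:ℝ) ≤ 1 := zero_le_one
    linarith

section AssumJ

variable {S J h : (Fin d → ℤ) → ℝ} {M K ζ : ℝ}

lemma summable_abs_tilt_J (hJ : AssumptionJweak S J h M K ζ) {μ : Fin d → ℝ}
    (hμ : μ ∈ closure (Omega S)) :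
    Summable fun y => |J y| * Real.exp (rdotZ μ y) :=
  (summable_abs_of_lpNorm_one (hJ.memQ μ hμ).Q_l1).congr fun y => abs_tilt J μ y

lemma summable_abs_tilt_h (hJ : AssumptionJweak S J h M K ζ) {μ : Fin d → ℝ}
    (hμ : μ ∈ closure (Omega S)) :
    Summable fun y => |h y| * Real.exp (rdotZ μ y) :=
  (summable_abs_of_lpNorm_one (hJ.memQ μ hμ).g_l1).congr fun y => abs_tilt h μ y

lemma summable_moment_tilt_J (hJ : AssumptionJweak S J h M K ζ) {μ : Fin d → ℝ}
    (hμ : μ ∈ closure (Omega S)) :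
    Summable fun y => enormZ y ^ (2 + ζ) * (|J y| * Real.exp (rdotZ μ y)) := by
  have := summable_abs_of_lpNorm_one (hJ.memQ μ hμ).Q_moment
  refine this.congr fun y => ?_
  rw [abs_mul, abs_of_nonneg (Real.rpow_nonneg (enormZ_nonneg y) _), abs_tilt]

/-- Second moments of the tilted `J` are summable, in quadratic-form form. -/
lemma summable_sq_tilt_J (hJ : AssumptionJweak S J h M K ζ) {μ : Fin d → ℝ}
    (hμ : μ ∈ closure (Omega S)) :
    Summable fun y => enormZ y ^ (2:ℕ) * (|J y| * Real.exp (rdotZ μ y)) := by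
  have h1 := summable_abs_tilt_J hJ hμ
  have h2 := summable_moment_tilt_J hJ hμ
  refine Summable.of_nonneg_of_le (fun y => ?_) (fun y => ?_) (h1.add h2)
  · exact mul_nonneg (pow_nonneg (enormZ_nonneg y) _)
      (mul_nonneg (abs_nonneg _) (Real.exp_pos _).le)
  · have hb := sq_le_one_add_rpow (enormZ_nonneg y) hJ.zeta_pos.le
    have hnn : 0 ≤ |J y| * Real.exp (rdotZ μ y) :=
      mul_nonneg (abs_nonneg _) (Real.exp_pos _).le
    calc enormZ y ^ (2:ℕ) * (|J y| * Real.exp (rdotZ μ y))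
        ≤ (1 + enormZ y ^ (2+ζ)) * (|J y| * Real.exp (rdotZ μ y)) := by
          exact mul_le_mul_of_nonneg_right hb hnn
      _ = |J y| * Real.exp (rdotZ μ y) + enormZ y ^ (2+ζ) * (|J y| * Real.exp (rdotZ μ y)) := by
          ring

lemma summable_quad_tilt_J (hJ : AssumptionJweak S J h M K ζ) {μ : Fin d → ℝ}
    (hμ : μ ∈ closure (Omega S)) (u : Fin d → ℝ) :
    Summable fun y => (rdotZ u y) ^ 2 * (|J y| * Real.exp (rdotZ μ y)) := by
  set C := ∑ i, |u i| with hC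
  have hsq := (summable_sq_tilt_J hJ hμ).mul_left (C^2)
  refine Summable.of_nonneg_of_le (fun y => ?_) (fun y => ?_) hsq
  · exact mul_nonneg (sq_nonneg _) (mul_nonneg (abs_nonneg _) (Real.exp_pos _).le)
  · have hnn : 0 ≤ |J y| * Real.exp (rdotZ μ y) :=
      mul_nonneg (abs_nonneg _) (Real.exp_pos _).le
    have h1 : (rdotZ u y)^2 ≤ (C * enormZ y)^2 := by
      rw [← sq_abs (rdotZ u y)]
      apply pow_le_pow_left₀ (abs_nonneg _) (abs_rdotZ_le u y)
    calc (rdotZ u y)^2 * (|J y| * Real.exp (rdotZ μ y))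
        ≤ (C * enormZ y)^2 * (|J y| * Real.exp (rdotZ μ y)) :=
          mul_le_mul_of_nonneg_right h1 hnn
      _ = C^2 * (enormZ y ^ (2:ℕ) * (|J y| * Real.exp (rdotZ μ y))) := by ring

lemma summable_lin_tilt_J (hJ : AssumptionJweak S J h M K ζ) {μ : Fin d → ℝ}
    (hμ : μ ∈ closure (Omega S)) (u : Fin d → ℝ) :
    Summable fun y => |rdotZ u y| * (|J y| * Real.exp (rdotZ μ y)) := by
  have := (summable_abs_tilt_J hJ hμ).add (summable_quad_tilt_J hJ hμ u)
  refine Summable.of_nonneg_of_le (fun y => ?_) (fun y => ?_) this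
  · exact mul_nonneg (abs_nonneg _) (mul_nonneg (abs_nonneg _) (Real.exp_pos _).le)
  · have hnn : 0 ≤ |J y| * Real.exp (rdotZ μ y) :=
      mul_nonneg (abs_nonneg _) (Real.exp_pos _).le
    have h1 : |rdotZ u y| ≤ 1 + (rdotZ u y)^2 := by nlinarith [sq_nonneg (|rdotZ u y| - 1), sq_abs (rdotZ u y)]
    calc |rdotZ u y| * (|J y| * Real.exp (rdotZ μ y))
        ≤ (1 + (rdotZ u y)^2) * (|J y| * Real.exp (rdotZ μ y)) :=
          mul_le_mul_of_nonneg_right h1 hnn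
      _ = |J y| * Real.exp (rdotZ μ y) + (rdotZ u y)^2 * (|J y| * Real.exp (rdotZ μ y)) := by ring

end AssumJ

section Chi

variable {S : (Fin d → ℤ) → ℝ}

lemma summable_tilt_S_of_mem_Omega (hS0 : ∀ x, 0 ≤ S x) {μ : Fin d → ℝ}
    (hμ : μ ∈ Omega S) : Summable fun x => S x * Real.exp (rdotZ μ x) := by
  have hne : (∑' x, ENNReal.ofReal (S x * Real.exp (rdotZ μ x))) ≠ ⊤ := hμ.ne
  have := ENNReal.summable_toReal hne
  refine this.congr fun x => ?_
  rw [ENNReal.toReal_ofReal (mul_nonneg (hS0 x) (Real.exp_pos _).le)]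

lemma chi_eq_ofReal (hS0 : ∀ x, 0 ≤ S x) {μ : Fin d → ℝ}
    (hsum : Summable fun x => S x * Real.exp (rdotZ μ x)) :
    chi S μ = ENNReal.ofReal (tiltSum S μ) := by
  rw [chi, tiltSum, ENNReal.ofReal_tsum_of_nonneg
    (fun x => mul_nonneg (hS0 x) (Real.exp_pos _).le) hsum]

lemma convex_Omega (hS0 : ∀ x, 0 ≤ S x) : Convex ℝ (Omega S) := by
  intro μ hμ ν hν a b ha hb hab
  have key : chi S (a • μ + b • ν) ≤
      ENNReal.ofReal a * chi S μ + ENNReal.ofReal b * chi S ν := by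
    rw [chi, chi, chi, ← ENNReal.tsum_mul_left, ← ENNReal.tsum_mul_left, ← ENNReal.tsum_add]
    refine ENNReal.tsum_le_tsum fun x => ?_
    have hexp : Real.exp (rdotZ (a • μ + b • ν) x) ≤
        a * Real.exp (rdotZ μ x) + b * Real.exp (rdotZ ν x) := by
      rw [rdotZ_add_left, rdotZ_smul_left, rdotZ_smul_left]
      have := convexOn_exp.2 (Set.mem_univ (rdotZ μ x)) (Set.mem_univ (rdotZ ν x)) ha hb hab
      simpa using this
    have h1 : S x * Real.exp (rdotZ (a • μ + b • ν) x) ≤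
        a * (S x * Real.exp (rdotZ μ x)) + b * (S x * Real.exp (rdotZ ν x)) := by
      have := mul_le_mul_of_nonneg_left hexp (hS0 x)
      calc S x * Real.exp (rdotZ (a • μ + b • ν) x)
          ≤ S x * (a * Real.exp (rdotZ μ x) + b * Real.exp (rdotZ ν x)) := this
        _ = a * (S x * Real.exp (rdotZ μ x)) + b * (S x * Real.exp (rdotZ ν x)) := by ring
    calc ENNReal.ofReal (S x * Real.exp (rdotZ (a • μ + b • ν) x))
        ≤ ENNReal.ofReal (a * (S x * Real.exp (rdotZ μ x)) + b * (S x * Real.exp (rdotZ ν x))) :=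
          ENNReal.ofReal_le_ofReal h1
      _ ≤ ENNReal.ofReal (a * (S x * Real.exp (rdotZ μ x))) +
            ENNReal.ofReal (b * (S x * Real.exp (rdotZ ν x))) := ENNReal.ofReal_add_le
      _ ≤ ENNReal.ofReal a * ENNReal.ofReal (S x * Real.exp (rdotZ μ x)) +
            ENNReal.ofReal b * ENNReal.ofReal (S x * Real.exp (rdotZ ν x)) := by
          rw [ENNReal.ofReal_mul ha, ENNReal.ofReal_mul hb]
  have : ENNReal.ofReal a * chi S μ + ENNReal.ofReal b * chi S ν < ⊤ := by
    exact ENNReal.add_lt_top.2 ⟨ENNReal.mul_lt_top (by simp) hμ, ENNReal.mul_lt_top (by simp) hν⟩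
  exact lt_of_le_of_lt key this

lemma smul_mem_Omega (hS : AssumptionOmega S) {μ : Fin d → ℝ}
    (hμ : μ ∈ closure (Omega S)) {t : ℝ} (ht0 : 0 ≤ t) (ht1 : t < 1) :
    t • μ ∈ Omega S := by
  have hconv := convex_Omega hS.nonneg
  have h0 : (0 : Fin d → ℝ) ∈ interior (Omega S) := by
    rw [hS.open_Omega.interior_eq]; exact hS.zero_mem
  have := hconv.combo_interior_closure_mem_interior h0 hμ
    (a := 1 - t) (b := t) (by linarith) ht0 (by ring)
  rw [hS.open_Omega.interior_eq] at this
  simpa using this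

end Chi

section OZid

variable {S J h : (Fin d → ℤ) → ℝ} {M K ζ : ℝ}

/-- The shear equivalence `(a, y) ↦ (a + y, y)` on `ℤ^d × ℤ^d`. -/
def shearEquiv (d : ℕ) : ((Fin d → ℤ) × (Fin d → ℤ)) ≃ ((Fin d → ℤ) × (Fin d → ℤ)) where
  toFun p := (p.1 + p.2, p.2)
  invFun p := (p.1 - p.2, p.2)
  left_inv p := by simp
  right_inv p := by simp

set_option maxHeartbeats 1000000 in
lemma oz_tiltSum (hS : AssumptionOmega S) (hJ : AssumptionJweak S J h M K ζ)
    {ν : Fin d → ℝ} (hν : ν ∈ Omega S) :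
    tiltSum S ν = tiltSum h ν + tiltSum J ν * tiltSum S ν := by
  have hνc : ν ∈ closure (Omega S) := subset_closure hν
  set F : (Fin d → ℤ) → ℝ := fun y => J y * Real.exp (rdotZ ν y) with hF
  set G : (Fin d → ℤ) → ℝ := fun y => S y * Real.exp (rdotZ ν y) with hG
  set H : (Fin d → ℤ) → ℝ := fun y => h y * Real.exp (rdotZ ν y) with hH
  have habsF : ∀ y, |F y| = |J y| * Real.exp (rdotZ ν y) := fun y => by
    rw [hF, abs_mul, abs_of_pos (Real.exp_pos _)]
  have hFabs : Summable fun y => |F y| :=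
    (summable_abs_tilt_J hJ hνc).congr fun y => (habsF y).symm
  have hHabs : Summable fun y => |H y| :=
    (summable_abs_tilt_h hJ hνc).congr fun y => by
      rw [hH, abs_mul, abs_of_pos (Real.exp_pos _)]
  have hHsum : Summable H := hHabs.of_abs
  have hGsum : Summable G := summable_tilt_S_of_mem_Omega hS.nonneg hν
  have hGnn : ∀ y, 0 ≤ G y := fun y => mul_nonneg (hS.nonneg y) (Real.exp_pos _).le
  have hGabs : Summable fun y => |G y| :=
    hGsum.congr fun y => (abs_of_nonneg (hGnn y)).symm
  set T : ((Fin d → ℤ) × (Fin d → ℤ)) → ℝ := fun p => F (p.1 - p.2) * G p.2 with hT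
  -- summability of |T| on the product
  have hprod : Summable fun p : ((Fin d → ℤ) × (Fin d → ℤ)) => |F p.1| * |G p.2| :=
    hFabs.mul_of_nonneg hGabs (fun y => abs_nonneg _) (fun y => abs_nonneg _)
  have hcomp : Summable fun p : ((Fin d → ℤ) × (Fin d → ℤ)) => |T (shearEquiv d p)| := by
    refine hprod.congr fun p => ?_
    show |F p.1| * |G p.2| = |F (p.1 + p.2 - p.2) * G p.2|
    rw [add_sub_cancel_right, ← abs_mul]
  have hTabs : Summable fun p => |T p| := (shearEquiv d).summable_iff.mp hcomp
  have hTsum : Summable T := hTabs.of_abs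
  -- value of the double sum
  have hTval : ∑' p, T p = (∑' y, F y) * (∑' y, G y) := by
    have h1 : ∀ p : ((Fin d → ℤ) × (Fin d → ℤ)), T (shearEquiv d p) = F p.1 * G p.2 := by
      intro p
      show F (p.1 + p.2 - p.2) * G p.2 = F p.1 * G p.2
      rw [add_sub_cancel_right]
    calc ∑' p, T p = ∑' p, T (shearEquiv d p) := ((shearEquiv d).tsum_eq T).symm
      _ = ∑' p : ((Fin d → ℤ) × (Fin d → ℤ)), F p.1 * G p.2 := tsum_congr h1
      _ = (∑' y, F y) * (∑' y, G y) := (tsum_mul_tsum_of_summable_norm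
            (hFabs.congr fun y => (Real.norm_eq_abs (F y)).symm)
            (hGabs.congr fun y => (Real.norm_eq_abs (G y)).symm)).symm
  -- marginal summabilities
  have hmarg := (summable_prod_of_nonneg (f := fun p => |T p|)
    (fun p => abs_nonneg (T p))).mp hTabs
  have hinner : ∀ x, Summable fun y => T (x, y) := fun x => (hmarg.1 x).of_abs
  have houter : Summable fun x => ∑' y, T (x, y) := by
    refine Summable.of_abs (Summable.of_nonneg_of_le (fun x => abs_nonneg _)
      (fun x => ?_) hmarg.2)
    exact (norm_tsum_le_tsum_norm
      ((hmarg.1 x).congr fun y => (Real.norm_eq_abs (T (x, y))).symm)).trans_eq rfl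
  -- pointwise OZ identity, tilted
  have hpt : ∀ x, G x = H x + ∑' y, T (x, y) := by
    intro x
    have h1 : G x = H x + (conv J S x) * Real.exp (rdotZ ν x) := by
      rw [hG, hH]
      simp only [hJ.OZ_eq x, add_mul]
    rw [h1]
    congr 1
    rw [conv, ← tsum_mul_right]
    refine tsum_congr fun y => ?_
    simp only [hT, hF, hG]
    have : rdotZ ν x = rdotZ ν (x - y) + rdotZ ν y := by rw [rdotZ_sub]; ring
    rw [this, Real.exp_add]
    ring
  -- sum the OZ identity
  have hfinal : ∑' x, G x = ∑' x, H x + ∑' x, ∑' y, T (x, y) := by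
    rw [tsum_congr hpt]
    exact Summable.tsum_add hHsum houter
  have hdouble : ∑' x, ∑' y, T (x, y) = (∑' y, F y) * (∑' y, G y) := by
    rw [← Summable.tsum_prod' hTsum hinner, hTval]
  rw [hdouble] at hfinal
  show (∑' x, G x) = (∑' x, H x) + (∑' y, F y) * (∑' x, G x)
  exact hfinal

lemma Jhat_lt_one_of_mem_Omega (hS : AssumptionOmega S) (hJ : AssumptionJweak S J h M K ζ)
    {ν : Fin d → ℝ} (hν : ν ∈ Omega S) : tiltSum J ν < 1 := by
  have hid := oz_tiltSum hS hJ hν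
  have ha : 0 ≤ tiltSum S ν :=
    tsum_nonneg fun x => mul_nonneg (hS.nonneg x) (Real.exp_pos _).le
  have hb : 0 < tiltSum h ν := hJ.hhat_pos ν (subset_closure hν)
  by_contra hc
  push_neg at hc
  nlinarith [mul_nonneg (sub_nonneg.2 hc) ha]

end OZid

section Segment

variable {S J h : (Fin d → ℤ) → ℝ} {M K ζ : ℝ}

lemma neBot_Ico_one : (𝓝[Set.Ico (0:ℝ) 1] 1).NeBot := by
  rw [← mem_closure_iff_nhdsWithin_neBot]
  rw [closure_Ico (by norm_num : (0:ℝ) ≠ 1)]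
  exact Set.right_mem_Icc.2 zero_le_one

/-- Dominated convergence along the segment `t • μ`, `t ↑ 1`. -/
lemma tendsto_tiltSum_seg {f : (Fin d → ℤ) → ℝ} {μ : Fin d → ℝ}
    (h0 : Summable fun y => |f y|)
    (h1 : Summable fun y => |f y| * Real.exp (rdotZ μ y)) :
    Tendsto (fun t : ℝ => tiltSum f (t • μ)) (𝓝[Set.Ico (0:ℝ) 1] 1) (𝓝 (tiltSum f μ)) := by
  have hb : Summable fun y => |f y| + |f y| * Real.exp (rdotZ μ y) := h0.add h1
  have key : Tendsto (fun t : ℝ => ∑' y, f y * Real.exp (t * rdotZ μ y))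
      (𝓝[Set.Ico (0:ℝ) 1] 1) (𝓝 (∑' y, f y * Real.exp (rdotZ μ y))) := by
    refine tendsto_tsum_of_dominated_convergence hb (fun y => ?_) ?_
    · have hc : Tendsto (fun t : ℝ => f y * Real.exp (t * rdotZ μ y)) (𝓝 1)
          (𝓝 (f y * Real.exp (1 * rdotZ μ y))) := by
        exact (Continuous.mul continuous_const
          ((Real.continuous_exp.comp (continuous_id.mul continuous_const)))).tendsto 1
      rw [one_mul] at hc
      exact hc.mono_left nhdsWithin_le_nhds
    · filter_upwards [eventually_mem_nhdsWithin] with t ht y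
      have ht0 : 0 ≤ t := ht.1
      have ht1 : t ≤ 1 := ht.2.le
      have hexp : Real.exp (t * rdotZ μ y) ≤ 1 + Real.exp (rdotZ μ y) := by
        rcases le_total (rdotZ μ y) 0 with hr | hr
        · have : t * rdotZ μ y ≤ 0 := mul_nonpos_of_nonneg_of_nonpos ht0 hr
          have := Real.exp_le_exp.2 this
          rw [Real.exp_zero] at this
          nlinarith [Real.exp_pos (rdotZ μ y)]
        · have : t * rdotZ μ y ≤ rdotZ μ y := by nlinarith
          have := Real.exp_le_exp.2 this
          linarith
      rw [Real.norm_eq_abs, abs_mul, abs_of_pos (Real.exp_pos _)]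
      calc |f y| * Real.exp (t * rdotZ μ y)
          ≤ |f y| * (1 + Real.exp (rdotZ μ y)) :=
            mul_le_mul_of_nonneg_left hexp (abs_nonneg _)
        _ = |f y| + |f y| * Real.exp (rdotZ μ y) := by ring
  have hcong : ∀ t : ℝ, tiltSum f (t • μ) = ∑' y, f y * Real.exp (t * rdotZ μ y) := by
    intro t
    exact tsum_congr fun y => by rw [rdotZ_smul_left]
  rw [tiltSum]
  exact (tendsto_congr hcong).mpr key

lemma Jhat_le_one_of_mem_closure (hS : AssumptionOmega S) (hJ : AssumptionJweak S J h M K ζ)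
    {μ : Fin d → ℝ} (hμ : μ ∈ closure (Omega S)) : tiltSum J μ ≤ 1 := by
  have := neBot_Ico_one
  refine le_of_tendsto (tendsto_tiltSum_seg
    (summable_abs_tilt_J hJ (subset_closure hS.zero_mem)
      |>.congr fun y => by rw [rdotZ_zero_left, Real.exp_zero, mul_one])
    (summable_abs_tilt_J hJ hμ)) ?_
  filter_upwards [eventually_mem_nhdsWithin] with t ht
  exact (Jhat_lt_one_of_mem_Omega hS hJ (smul_mem_Omega hS hμ ht.1 ht.2)).le

lemma mem_Omega_of_Jhat_lt_one (hS : AssumptionOmega S) (hJ : AssumptionJweak S J h M K ζ)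
    {μ : Fin d → ℝ} (hμ : μ ∈ closure (Omega S)) (hlt : tiltSum J μ < 1) :
    μ ∈ Omega S := by
  have := neBot_Ico_one
  have h0c : (0 : Fin d → ℝ) ∈ closure (Omega S) := subset_closure hS.zero_mem
  have hJ0 : Summable fun y => |J y| :=
    (summable_abs_tilt_J hJ h0c).congr fun y => by
      rw [rdotZ_zero_left, Real.exp_zero, mul_one]
  have hh0 : Summable fun y => |h y| :=
    (summable_abs_tilt_h hJ h0c).congr fun y => by
      rw [rdotZ_zero_left, Real.exp_zero, mul_one]
  -- limits of the numerator and denominator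
  have hJt := tendsto_tiltSum_seg (f := J) (μ := μ) hJ0 (summable_abs_tilt_J hJ hμ)
  have hht := tendsto_tiltSum_seg (f := h) (μ := μ) hh0 (summable_abs_tilt_h hJ hμ)
  have hden : Tendsto (fun t : ℝ => 1 - tiltSum J (t • μ)) (𝓝[Set.Ico (0:ℝ) 1] 1)
      (𝓝 (1 - tiltSum J μ)) := tendsto_const_nhds.sub hJt
  have hne : (1 - tiltSum J μ) ≠ 0 := by linarith
  have hrat : Tendsto (fun t : ℝ => tiltSum h (t • μ) / (1 - tiltSum J (t • μ)))
      (𝓝[Set.Ico (0:ℝ) 1] 1) (𝓝 (tiltSum h μ / (1 - tiltSum J μ))) := hht.div hden hne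
  set L : ℝ := tiltSum h μ / (1 - tiltSum J μ) with hL
  -- on the segment, `tiltSum S` equals the ratio
  have hrepr : ∀ t : ℝ, t ∈ Set.Ico (0:ℝ) 1 → tiltSum S (t • μ) =
      tiltSum h (t • μ) / (1 - tiltSum J (t • μ)) := by
    intro t ht
    have htΩ : t • μ ∈ Omega S := smul_mem_Omega hS hμ ht.1 ht.2
    have hid := oz_tiltSum hS hJ htΩ
    have hJlt := Jhat_lt_one_of_mem_Omega hS hJ htΩ
    rw [eq_div_iff (by linarith : 1 - tiltSum J (t • μ) ≠ 0)]
    linarith [hid]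
  -- finite partial sums are bounded by `L`
  have hFS : ∀ Fs : Finset (Fin d → ℤ), ∑ x ∈ Fs, S x * Real.exp (rdotZ μ x) ≤ L := by
    intro Fs
    have hTendFS : Tendsto (fun t : ℝ => ∑ x ∈ Fs, S x * Real.exp (t * rdotZ μ x))
        (𝓝[Set.Ico (0:ℝ) 1] 1) (𝓝 (∑ x ∈ Fs, S x * Real.exp (rdotZ μ x))) := by
      have : Tendsto (fun t : ℝ => ∑ x ∈ Fs, S x * Real.exp (t * rdotZ μ x)) (𝓝 1)
          (𝓝 (∑ x ∈ Fs, S x * Real.exp (1 * rdotZ μ x))) := by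
        refine tendsto_finset_sum _ fun x _ => ?_
        exact (Continuous.mul continuous_const
          ((Real.continuous_exp.comp (continuous_id.mul continuous_const)))).tendsto 1
      simp only [one_mul] at this
      exact this.mono_left nhdsWithin_le_nhds
    refine le_of_tendsto_of_tendsto hTendFS hrat ?_
    filter_upwards [eventually_mem_nhdsWithin] with t ht
    have htΩ : t • μ ∈ Omega S := smul_mem_Omega hS hμ ht.1 ht.2
    have hsum : Summable fun x => S x * Real.exp (t * rdotZ μ x) :=
      (summable_tilt_S_of_mem_Omega hS.nonneg htΩ).congr fun x => by
        rw [rdotZ_smul_left]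
    have hle : ∑ x ∈ Fs, S x * Real.exp (t * rdotZ μ x) ≤
        ∑' x, S x * Real.exp (t * rdotZ μ x) :=
      Summable.sum_le_tsum Fs (fun x _ => mul_nonneg (hS.nonneg x) (Real.exp_pos _).le) hsum
    have heq : (∑' x, S x * Real.exp (t * rdotZ μ x)) = tiltSum S (t • μ) :=
      tsum_congr fun x => by rw [rdotZ_smul_left]
    rw [heq] at hle
    exact hle.trans_eq (hrepr t ht)
  -- conclude finiteness of `chi S μ`
  have hchi : chi S μ ≤ ENNReal.ofReal L := by
    rw [chi, ENNReal.tsum_eq_iSup_sum]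
    refine iSup_le fun Fs => ?_
    rw [← ENNReal.ofReal_sum_of_nonneg
      (fun x _ => mul_nonneg (hS.nonneg x) (Real.exp_pos _).le)]
    exact ENNReal.ofReal_le_ofReal (hFS Fs)
  exact lt_of_le_of_lt hchi ENNReal.ofReal_lt_top

/-- On the frontier, `Ĵ^{(μ)}(0) = 1`. -/
lemma Jhat_eq_one_of_frontier (hS : AssumptionOmega S) (hJ : AssumptionJweak S J h M K ζ)
    {μ : Fin d → ℝ} (hμ : μ ∈ frontier (Omega S)) : tiltSum J μ = 1 := by
  have hμc : μ ∈ closure (Omega S) := frontier_subset_closure hμ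
  have hnot : μ ∉ Omega S := by
    intro hmem
    exact (hS.open_Omega.frontier_eq ▸ hμ).2 (hS.open_Omega.interior_eq ▸ hmem)
  refine le_antisymm (Jhat_le_one_of_mem_closure hS hJ hμc) ?_
  by_contra hlt
  push_neg at hlt
  exact hnot (mem_Omega_of_Jhat_lt_one hS hJ hμc hlt)

end Segment

section Infrared

variable {S J h : (Fin d → ℤ) → ℝ} {M K ζ : ℝ}

lemma summable_fourier_term {Q : (Fin d → ℤ) → ℝ} (hQ : Summable fun y => |Q y|)
    (k : Fin d → ℝ) :
    Summable fun y => (Q y : ℂ) * Complex.exp (-Complex.I * (rdotZ k y : ℂ)) := by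
  refine Summable.of_norm (hQ.congr fun y => ?_)
  rw [norm_mul, Complex.norm_real, Real.norm_eq_abs, Complex.norm_exp]
  have : (-Complex.I * (rdotZ k y : ℂ)).re = 0 := by simp
  rw [this, Real.exp_zero, mul_one]

lemma re_fourierZ {Q : (Fin d → ℤ) → ℝ} (hQ : Summable fun y => |Q y|) (k : Fin d → ℝ) :
    (fourierZ Q k).re = ∑' y, Q y * Real.cos (rdotZ k y) := by
  rw [fourierZ, Complex.re_tsum (summable_fourier_term hQ k)]
  refine tsum_congr fun y => ?_
  rw [Complex.mul_re, Complex.ofReal_re, Complex.ofReal_im, Complex.exp_re]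
  have h1 : (-Complex.I * (rdotZ k y : ℂ)).re = 0 := by simp
  have h2 : (-Complex.I * (rdotZ k y : ℂ)).im = -(rdotZ k y) := by simp
  rw [h1, h2, Real.exp_zero, one_mul, Real.cos_neg, zero_mul, sub_zero]

lemma re_fourierZ_diff {Q : (Fin d → ℤ) → ℝ} (hQ : Summable fun y => |Q y|) (k : Fin d → ℝ) :
    (fourierZ Q 0 - fourierZ Q k).re = ∑' y, Q y * (1 - Real.cos (rdotZ k y)) := by
  have hQs : Summable Q := hQ.of_abs
  have hQc : Summable fun y => Q y * Real.cos (rdotZ k y) := by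
    refine Summable.of_abs (Summable.of_nonneg_of_le (fun y => abs_nonneg _) (fun y => ?_) hQ)
    rw [abs_mul]
    exact (mul_le_mul_of_nonneg_left (Real.abs_cos_le_one _) (abs_nonneg _)).trans_eq (mul_one _)
  rw [Complex.sub_re, re_fourierZ hQ 0, re_fourierZ hQ k]
  have h0 : ∀ y : Fin d → ℤ, Q y * Real.cos (rdotZ (0 : Fin d → ℝ) y) = Q y := fun y => by
    rw [rdotZ_zero_left, Real.cos_zero, mul_one]
  rw [tsum_congr h0, ← Summable.tsum_sub hQs hQc]
  exact tsum_congr fun y => by ring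

lemma one_sub_cos_eq (x : ℝ) : 1 - Real.cos x = 2 * Real.sin (x/2) ^ 2 := by
  have hc := Real.cos_two_mul (x/2)
  rw [show 2*(x/2) = x by ring] at hc
  nlinarith [Real.sin_sq_add_cos_sq (x/2)]

lemma one_sub_cos_le (x : ℝ) : 1 - Real.cos x ≤ x^2 / 2 := by
  rw [one_sub_cos_eq]
  have h1 : Real.sin (x/2)^2 ≤ (x/2)^2 := by
    rw [← sq_abs (Real.sin (x/2)), ← sq_abs (x/2)]
    exact pow_le_pow_left₀ (abs_nonneg _) (Real.abs_sin_le_abs) 2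
  nlinarith

lemma tendsto_sin_div : Tendsto (fun x : ℝ => Real.sin x / x) (𝓝[≠] (0:ℝ)) (𝓝 1) := by
  have h := (Real.hasDerivAt_sin 0)
  rw [Real.cos_zero] at h
  have := hasDerivAt_iff_tendsto_slope.mp h
  refine this.congr fun x => ?_
  rw [slope_def_field]
  simp [div_eq_div_iff]

lemma tendsto_one_sub_cos_div_sq (a : ℝ) :
    Tendsto (fun ε : ℝ => (1 - Real.cos (ε * a)) / ε^2) (𝓝[>] (0:ℝ)) (𝓝 (a^2/2)) := by
  rcases eq_or_ne a 0 with rfl | ha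
  · refine Tendsto.congr' ?_ (tendsto_const_nhds (α := ℝ))
    · filter_upwards with ε
      simp
  · have hmap : Tendsto (fun ε : ℝ => ε * a / 2) (𝓝[>] (0:ℝ)) (𝓝[≠] (0:ℝ)) := by
      refine tendsto_nhdsWithin_of_tendsto_nhds_of_eventually_within _ ?_ ?_
      · have : Tendsto (fun ε : ℝ => ε * a / 2) (𝓝 0) (𝓝 (0 * a / 2)) :=
          (continuous_id.mul continuous_const |>.div_const 2).tendsto 0
        rw [zero_mul, zero_div] at this
        exact this.mono_left nhdsWithin_le_nhds
      · filter_upwards [self_mem_nhdsWithin] with ε (hε : 0 < ε)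
        have : ε * a ≠ 0 := mul_ne_zero hε.ne' ha
        simp only [Set.mem_compl_iff, Set.mem_singleton_iff]
        intro hcon
        exact this (by linarith [hcon])
    have hsq : Tendsto (fun ε : ℝ => (Real.sin (ε*a/2) / (ε*a/2))^2) (𝓝[>] (0:ℝ)) (𝓝 1) := by
      have := (tendsto_sin_div.comp hmap).pow 2
      simpa using this
    have hfin : Tendsto (fun ε : ℝ => (a^2/2) * (Real.sin (ε*a/2) / (ε*a/2))^2)
        (𝓝[>] (0:ℝ)) (𝓝 (a^2/2)) := by
      have := hsq.const_mul (a^2/2)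
      simpa using this
    refine Tendsto.congr' ?_ hfin
    filter_upwards [self_mem_nhdsWithin] with ε (hε : 0 < ε)
    rw [one_sub_cos_eq]
    have hεa : ε * a / 2 ≠ 0 := div_ne_zero (mul_ne_zero hε.ne' ha) two_ne_zero
    field_simp

end Infrared

section Quad

variable {S J h : (Fin d → ℤ) → ℝ} {M K ζ : ℝ}

lemma enormR_sq (x : Fin d → ℝ) : enormR x ^ 2 = ∑ i, x i ^ 2 :=
  Real.sq_sqrt (Finset.sum_nonneg fun i _ => sq_nonneg _)

lemma enormR_smul_sq (ε : ℝ) (u : Fin d → ℝ) :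
    enormR (ε • u) ^ 2 = ε^2 * enormR u ^ 2 := by
  rw [enormR_sq, enormR_sq, Finset.mul_sum]
  refine Finset.sum_congr rfl fun i _ => ?_
  rw [Pi.smul_apply, smul_eq_mul, mul_pow]

lemma quad_lower (hJ : AssumptionJweak S J h M K ζ)
    {μ : Fin d → ℝ} (hμ : μ ∈ closure (Omega S)) (u : Fin d → ℝ) :
    2 * K * enormR u ^ 2 ≤ ∑' y, (rdotZ u y)^2 * (J y * Real.exp (rdotZ μ y)) := by
  have hQabs : Summable fun y => |tilt J μ y| :=
    summable_abs_of_lpNorm_one (hJ.memQ μ hμ).Q_l1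
  set c : (Fin d → ℤ) → ℝ := fun y => J y * Real.exp (rdotZ μ y) with hc
  set a : (Fin d → ℤ) → ℝ := fun y => rdotZ u y with ha
  have habs_c : ∀ y, |c y| = |J y| * Real.exp (rdotZ μ y) := fun y => by
    rw [hc, abs_mul, abs_of_pos (Real.exp_pos _)]
  -- Step 1: infrared bound at k = ε • u
  have step1 : ∀ ε : ℝ, 0 < ε → (∀ i, |(ε • u) i| ≤ π) →
      K * (ε^2 * enormR u ^ 2) ≤ ∑' y, c y * (1 - Real.cos (ε * a y)) := by
    intro ε hε hπ
    have hir := (hJ.memQ μ hμ).infrared (ε • u) hπ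
    rw [re_fourierZ_diff hQabs (ε • u)] at hir
    rw [enormR_smul_sq] at hir
    have : (∑' y, tilt J μ y * (1 - Real.cos (rdotZ (ε • u) y))) =
        ∑' y, c y * (1 - Real.cos (ε * a y)) := by
      refine tsum_congr fun y => ?_
      rw [rdotZ_smul_left]
      rfl
    rw [this] at hir
    calc K * (ε^2 * enormR u ^ 2) = K * enormR (ε • u) ^2 / 1 := by
          rw [enormR_smul_sq]; ring
      _ ≤ ∑' y, c y * (1 - Real.cos (ε * a y)) := by
          rw [div_one, enormR_smul_sq]
          exact hir
  -- Step 2: dominated convergence as ε ↓ 0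
  have hbound : Summable fun y => |c y| * (a y ^ 2 / 2) := by
    have := (summable_quad_tilt_J hJ hμ u).div_const 2
    refine this.congr fun y => ?_
    rw [habs_c]
    ring
  have step2 : Tendsto (fun ε : ℝ => ∑' y, c y * ((1 - Real.cos (ε * a y)) / ε^2))
      (𝓝[>] (0:ℝ)) (𝓝 (∑' y, c y * (a y ^2 / 2))) := by
    refine tendsto_tsum_of_dominated_convergence hbound (fun y => ?_) ?_
    · exact (tendsto_one_sub_cos_div_sq (a y)).const_mul (c y)
    · filter_upwards [self_mem_nhdsWithin] with ε (hε : 0 < ε) y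
      rw [Real.norm_eq_abs, abs_mul]
      refine mul_le_mul_of_nonneg_left ?_ (abs_nonneg _)
      have h1 : 0 ≤ 1 - Real.cos (ε * a y) := by
        linarith [Real.cos_le_one (ε * a y)]
      have h2 : (1 - Real.cos (ε * a y)) / ε^2 ≤ a y ^2 / 2 := by
        rw [div_le_iff₀ (by positivity)]
        calc 1 - Real.cos (ε * a y) ≤ (ε * a y)^2 / 2 := one_sub_cos_le _
          _ = a y ^2 / 2 * ε^2 := by ring
      rw [abs_div, abs_of_nonneg h1, abs_of_nonneg (sq_nonneg ε)]
      exact h2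
  -- Step 3: the bound holds eventually
  have step3 : ∀ᶠ ε in 𝓝[>] (0:ℝ),
      K * enormR u ^ 2 ≤ ∑' y, c y * ((1 - Real.cos (ε * a y)) / ε^2) := by
    set C : ℝ := ∑ i, |u i| with hC
    have hC0 : 0 ≤ C := Finset.sum_nonneg fun i _ => abs_nonneg _
    have hδ : 0 < π / (1 + C) := div_pos Real.pi_pos (by linarith)
    filter_upwards [Ioo_mem_nhdsGT_of_mem (Set.left_mem_Ico.2 hδ)] with ε hε
    have hε0 : 0 < ε := hε.1
    have hπ : ∀ i, |(ε • u) i| ≤ π := by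
      intro i
      rw [Pi.smul_apply, smul_eq_mul, abs_mul, abs_of_pos hε0]
      have h1 : |u i| ≤ C :=
        Finset.single_le_sum (f := fun j => |u j|) (fun j _ => abs_nonneg _) (Finset.mem_univ i)
      have h2 : ε ≤ π / (1 + C) := hε.2.le
      calc ε * |u i| ≤ (π / (1+C)) * (1 + C) := by
            apply mul_le_mul h2 (by linarith) (abs_nonneg _) (le_of_lt (div_pos Real.pi_pos (by linarith)))
        _ = π := by field_simp
    have h1 := step1 ε hε0 hπ
    have heq : (∑' y, c y * ((1 - Real.cos (ε * a y)) / ε^2)) =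
        (∑' y, c y * (1 - Real.cos (ε * a y))) / ε^2 := by
      rw [← tsum_div_const]
      exact tsum_congr fun y => by ring
    rw [heq, le_div_iff₀ (by positivity)]
    calc K * enormR u ^2 * ε^2 = K * (ε^2 * enormR u ^2) := by ring
      _ ≤ _ := h1
  -- Step 4: pass to the limit
  have step4 : K * enormR u ^ 2 ≤ ∑' y, c y * (a y ^2 / 2) :=
    ge_of_tendsto step2 step3
  -- Step 5: rearrange
  have step5 : (∑' y, c y * (a y ^2 / 2)) = (∑' y, a y^2 * c y) / 2 := by
    rw [← tsum_div_const]
    exact tsum_congr fun y => by ring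
  rw [step5] at step4
  have : (∑' y, a y^2 * c y) = ∑' y, (rdotZ u y)^2 * (J y * Real.exp (rdotZ μ y)) := rfl
  linarith [step4]

end Quad

section Strict

variable {S J h : (Fin d → ℤ) → ℝ} {M K ζ : ℝ}

lemma rdotZ_sub_left (μ ν : Fin d → ℝ) (x : Fin d → ℤ) :
    rdotZ (μ - ν) x = rdotZ μ x - rdotZ ν x := by
  simp only [rdotZ, Pi.sub_apply, sub_mul, Finset.sum_sub_distrib]

lemma enormR_pos {x : Fin d → ℝ} (hx : x ≠ 0) : 0 < enormR x := by
  rw [enormR, Real.sqrt_pos]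
  obtain ⟨i, hi⟩ : ∃ i, x i ≠ 0 := by
    by_contra hcon
    push_neg at hcon
    exact hx (funext hcon)
  exact Finset.sum_pos' (fun j _ => sq_nonneg _) ⟨i, Finset.mem_univ i, by positivity⟩

lemma midpoint_mem_Omega (hS : AssumptionOmega S) (hJ : AssumptionJweak S J h M K ζ)
    {μ ν : Fin d → ℝ} (hμ : μ ∈ closure (Omega S)) (hν : ν ∈ closure (Omega S))
    (hne : μ ≠ ν) : (1/2 : ℝ) • (μ + ν) ∈ Omega S := by
  set π₀ : Fin d → ℝ := (1/2 : ℝ) • (μ + ν) with hπ₀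
  set δ : Fin d → ℝ := (1/4 : ℝ) • (ν - μ) with hδ
  have hδne : δ ≠ 0 := by
    rw [hδ]
    exact smul_ne_zero (by norm_num) (sub_ne_zero.2 (Ne.symm hne))
  -- the segment through `π₀` in direction `δ` stays in the closure
  have hconvCl : Convex ℝ (closure (Omega S)) := (convex_Omega hS.nonneg).closure
  have hseg : ∀ t : ℝ, -2 ≤ t → t ≤ 2 → π₀ + t • δ ∈ closure (Omega S) := by
    intro t ht1 ht2
    have heq : π₀ + t • δ = (1/2 - t/4) • μ + (1/2 + t/4) • ν := by
      funext i
      simp only [hπ₀, hδ, Pi.add_apply, Pi.smul_apply, Pi.sub_apply, smul_eq_mul]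
      ring
    rw [heq]
    exact hconvCl hμ hν (by linarith) (by linarith) (by ring)
  -- local coordinates
  set c : (Fin d → ℤ) → ℝ := fun y => J y * Real.exp (rdotZ π₀ y) with hc
  set a : (Fin d → ℤ) → ℝ := fun y => rdotZ δ y with ha
  have hrdot : ∀ (t : ℝ) (y : Fin d → ℤ), rdotZ (π₀ + t • δ) y = rdotZ π₀ y + t * a y := by
    intro t y
    rw [rdotZ_add_left]
    congr 1
    exact rdotZ_smul_left t δ y
  have hpq : ∀ y : Fin d → ℤ, rdotZ π₀ y = (rdotZ μ y + rdotZ ν y)/2 ∧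
      a y = (rdotZ ν y - rdotZ μ y)/4 := by
    intro y
    constructor
    · rw [hπ₀, rdotZ_smul_left, rdotZ_add_left]; ring
    · have h4 : a y = rdotZ ((1/4:ℝ) • (ν - μ)) y := rfl
      rw [h4, rdotZ_smul_left, rdotZ_sub_left]; ring
  -- uniform bound on the tilted terms for `t ∈ [-2, 2]`
  set u0 : (Fin d → ℤ) → ℝ :=
    fun y => |J y| * Real.exp (rdotZ μ y) + |J y| * Real.exp (rdotZ ν y) with hu0
  have hu0sum : Summable u0 := (summable_abs_tilt_J hJ hμ).add (summable_abs_tilt_J hJ hν)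
  have hub : ∀ t : ℝ, -2 ≤ t → t ≤ 2 → ∀ y, |c y| * Real.exp (t * a y) ≤ u0 y := by
    intro t ht1 ht2 y
    obtain ⟨hp, hq⟩ := hpq y
    set p := rdotZ μ y
    set q := rdotZ ν y
    have habs : |c y| = |J y| * Real.exp (rdotZ π₀ y) := by
      rw [hc, abs_mul, abs_of_pos (Real.exp_pos _)]
    rw [habs, mul_assoc, ← Real.exp_add, hp, hq, hu0]
    have hkey : Real.exp ((p + q)/2 + t * ((q - p)/4)) ≤ Real.exp p + Real.exp q := by
      rcases le_total p q with hpq' | hpq'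
      · have : (p + q)/2 + t * ((q - p)/4) ≤ q := by nlinarith
        have := Real.exp_le_exp.2 this
        linarith [Real.exp_pos p]
      · have : (p + q)/2 + t * ((q - p)/4) ≤ p := by nlinarith
        have := Real.exp_le_exp.2 this
        linarith [Real.exp_pos q]
    calc |J y| * Real.exp ((p + q)/2 + t * ((q - p)/4))
        ≤ |J y| * (Real.exp p + Real.exp q) :=
          mul_le_mul_of_nonneg_left hkey (abs_nonneg _)
      _ = |J y| * Real.exp p + |J y| * Real.exp q := by ring
  -- summable bounds for the derivatives
  have hu1sum : Summable fun y => |a y| * u0 y := by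
    have := (summable_lin_tilt_J hJ hμ δ).add (summable_lin_tilt_J hJ hν δ)
    refine this.congr fun y => ?_
    rw [hu0]; ring
  have hu2sum : Summable fun y => a y ^ 2 * u0 y := by
    have := (summable_quad_tilt_J hJ hμ δ).add (summable_quad_tilt_J hJ hν δ)
    refine this.congr fun y => ?_
    rw [hu0]; ring
  -- the function and its derivatives
  set f : ℝ → ℝ := fun t => ∑' y, c y * Real.exp (t * a y) with hf
  set f1 : ℝ → ℝ := fun t => ∑' y, (c y * a y) * Real.exp (t * a y) with hf1
  set f2 : ℝ → ℝ := fun t => ∑' y, (c y * a y ^ 2) * Real.exp (t * a y) with hf2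
  have hgderiv : ∀ (y : Fin d → ℤ) (t : ℝ),
      HasDerivAt (fun s => c y * Real.exp (s * a y)) ((c y * a y) * Real.exp (t * a y)) t := by
    intro y t
    have h1 : HasDerivAt (fun s : ℝ => s * a y) (a y) t := hasDerivAt_mul_const _
    have h2 := (h1.exp).const_mul (c y)
    exact h2.congr_deriv (by ring)
  have hgderiv2 : ∀ (y : Fin d → ℤ) (t : ℝ),
      HasDerivAt (fun s => (c y * a y) * Real.exp (s * a y))
        ((c y * a y ^ 2) * Real.exp (t * a y)) t := by
    intro y t
    have h1 : HasDerivAt (fun s : ℝ => s * a y) (a y) t := hasDerivAt_mul_const _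
    have h2 := (h1.exp).const_mul (c y * a y)
    exact h2.congr_deriv (by ring)
  have hopen : IsOpen (Set.Ioo (-2:ℝ) 2) := isOpen_Ioo
  have hpre : IsPreconnected (Set.Ioo (-2:ℝ) 2) := (convex_Ioo _ _).isPreconnected
  have h0mem : (0:ℝ) ∈ Set.Ioo (-2:ℝ) 2 := by norm_num
  have hcsum : Summable fun y => c y * Real.exp ((0:ℝ) * a y) := by
    refine Summable.of_abs (Summable.of_nonneg_of_le (fun y => abs_nonneg _)
      (fun y => ?_) hu0sum)
    rw [abs_mul, abs_of_pos (Real.exp_pos _)]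
    exact hub 0 (by norm_num) (by norm_num) y
  have hf1sum : Summable fun y => (c y * a y) * Real.exp ((0:ℝ) * a y) := by
    refine Summable.of_abs (Summable.of_nonneg_of_le (fun y => abs_nonneg _)
      (fun y => ?_) hu1sum)
    rw [abs_mul, abs_mul, abs_of_pos (Real.exp_pos _)]
    calc |c y| * |a y| * Real.exp (0 * a y) = |a y| * (|c y| * Real.exp (0 * a y)) := by ring
      _ ≤ |a y| * u0 y := mul_le_mul_of_nonneg_left
          (hub 0 (by norm_num) (by norm_num) y) (abs_nonneg _)
  have hderiv1 : ∀ t ∈ Set.Ioo (-2:ℝ) 2, HasDerivAt f (f1 t) t := by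
    intro t ht
    exact hasDerivAt_tsum_of_isPreconnected hu1sum hopen hpre
      (fun y s _ => hgderiv y s)
      (fun y s hs => by
        rw [Real.norm_eq_abs, abs_mul, abs_mul, abs_of_pos (Real.exp_pos _)]
        calc |c y| * |a y| * Real.exp (s * a y)
            = |a y| * (|c y| * Real.exp (s * a y)) := by ring
          _ ≤ |a y| * u0 y := mul_le_mul_of_nonneg_left
              (hub s hs.1.le hs.2.le y) (abs_nonneg _))
      h0mem hcsum ht
  have hderiv2 : ∀ t ∈ Set.Ioo (-2:ℝ) 2, HasDerivAt f1 (f2 t) t := by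
    intro t ht
    exact hasDerivAt_tsum_of_isPreconnected hu2sum hopen hpre
      (fun y s _ => hgderiv2 y s)
      (fun y s hs => by
        rw [Real.norm_eq_abs, abs_mul, abs_mul, abs_of_pos (Real.exp_pos _)]
        calc |c y| * |a y ^ 2| * Real.exp (s * a y)
            = a y ^ 2 * (|c y| * Real.exp (s * a y)) := by
              rw [abs_of_nonneg (sq_nonneg (a y))]; ring
          _ ≤ a y ^ 2 * u0 y := mul_le_mul_of_nonneg_left
              (hub s hs.1.le hs.2.le y) (sq_nonneg _))
      h0mem hf1sum ht
  -- the second derivative is strictly positive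
  have hIccIoo : Set.Icc (-1:ℝ) 1 ⊆ Set.Ioo (-2:ℝ) 2 := fun x hx => by
    constructor <;> [linarith [hx.1]; linarith [hx.2]]
  have hf2pos : ∀ t : ℝ, -2 ≤ t → t ≤ 2 → 0 < f2 t := by
    intro t ht1 ht2
    have hmem := hseg t ht1 ht2
    have hquad := quad_lower hJ hmem δ
    have heq : f2 t = ∑' y, (rdotZ δ y)^2 * (J y * Real.exp (rdotZ (π₀ + t • δ) y)) := by
      rw [hf2]
      refine tsum_congr fun y => ?_
      rw [hrdot t y, Real.exp_add, hc]
      ring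
    rw [heq]
    have hK := hJ.K_pos
    have hδpos := enormR_pos hδne
    calc (0:ℝ) < 2 * K * enormR δ ^ 2 := by positivity
      _ ≤ _ := hquad
  -- strict convexity of `f` on `[-1, 1]`
  have hsc : StrictConvexOn ℝ (Set.Icc (-1:ℝ) 1) f := by
    refine strictConvexOn_of_deriv2_pos (convex_Icc _ _) ?_ ?_
    · intro x hx
      exact (hderiv1 x (hIccIoo hx)).continuousAt.continuousWithinAt
    · intro x hx
      rw [interior_Icc] at hx
      have hx2 : x ∈ Set.Ioo (-2:ℝ) 2 := ⟨by linarith [hx.1], by linarith [hx.2]⟩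
      have hEq : deriv f =ᶠ[nhds x] f1 := by
        filter_upwards [hopen.mem_nhds hx2] with z hz
        exact (hderiv1 z hz).deriv
      have : deriv^[2] f x = deriv (deriv f) x := rfl
      rw [this, hEq.deriv_eq, (hderiv2 x hx2).deriv]
      exact hf2pos x (by linarith [hx.1]) (by linarith [hx.2])
  -- evaluate: midpoint strictly below the average of the endpoints
  have hmid := hsc.2 (Set.mem_Icc.2 ⟨le_refl _, by norm_num⟩ :
      (-1:ℝ) ∈ Set.Icc (-1:ℝ) 1) (Set.mem_Icc.2 ⟨by norm_num, le_refl _⟩ :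
      (1:ℝ) ∈ Set.Icc (-1:ℝ) 1) (by norm_num)
    (by norm_num : (0:ℝ) < 1/2) (by norm_num : (0:ℝ) < 1/2) (by norm_num)
  have hpt : (1/2 : ℝ) • (-1:ℝ) + (1/2 : ℝ) • (1:ℝ) = 0 := by norm_num
  rw [hpt] at hmid
  -- identify the values of `f` with tilted sums
  have hfval : ∀ t : ℝ, f t = tiltSum J (π₀ + t • δ) := by
    intro t
    rw [hf, tiltSum]
    refine tsum_congr fun y => ?_
    rw [hrdot t y, Real.exp_add, hc]
    ring
  have hf0 : f 0 = tiltSum J π₀ := by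
    rw [hfval 0]
    congr 1
    funext i
    simp
  have hfm1 : f (-1) ≤ 1 := by
    rw [hfval (-1)]
    exact Jhat_le_one_of_mem_closure hS hJ (hseg (-1) (by norm_num) (by norm_num))
  have hfp1 : f 1 ≤ 1 := by
    rw [hfval 1]
    exact Jhat_le_one_of_mem_closure hS hJ (hseg 1 (by norm_num) (by norm_num))
  have hlt : tiltSum J π₀ < 1 := by
    rw [← hf0]
    have : (1/2 : ℝ) • f (-1) + (1/2 : ℝ) • f 1 ≤ 1 := by
      simp only [smul_eq_mul]
      linarith
    linarith [hmid]
  have hπ₀cl : π₀ ∈ closure (Omega S) := by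
    have := hseg 0 (by norm_num) (by norm_num)
    have h00 : π₀ + (0:ℝ) • δ = π₀ := by funext i; simp
    rwa [h00] at this
  exact mem_Omega_of_Jhat_lt_one hS hJ hπ₀cl hlt

end Strict
theorem statement1 (d : ℕ) (hd : 1 ≤ d) (S J h : (Fin d → ℤ) → ℝ) (M K ζ : ℝ)
    (hS : AssumptionOmega S) (hJ : AssumptionJweak S J h M K ζ) :
    (Omega S ⊆ {μ : Fin d → ℝ |
        Summable (fun y => |J y| * Real.exp (rdotZ μ y)) ∧ tiltSum J μ < 1}) ∧
    (frontier (Omega S) ⊆ {μ : Fin d → ℝ |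
        Summable (fun y => |J y| * Real.exp (rdotZ μ y)) ∧ tiltSum J μ = 1}) ∧
    (∀ μ ∈ closure (Omega S), ∀ ν ∈ closure (Omega S), μ ≠ ν →
        (1 / 2 : ℝ) • (μ + ν) ∈ interior (closure (Omega S))) := by
  refine ⟨?_, ?_, ?_⟩
  · intro μ hμ
    exact ⟨summable_abs_tilt_J hJ (subset_closure hμ), Jhat_lt_one_of_mem_Omega hS hJ hμ⟩
  · intro μ hμ
    exact ⟨summable_abs_tilt_J hJ (frontier_subset_closure hμ),
      Jhat_eq_one_of_frontier hS hJ hμ⟩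
  · intro μ hμ ν hν hne
    exact interior_maximal subset_closure hS.open_Omega
      (midpoint_mem_Omega hS hJ hμ hν hne)

end OZpaper
end
end
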